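/- arXiv:1509.03812 — 3 statements merged into one kernel-verified Lean document; each statement's English description precedes it below -/
import Mathlib

section
/- Suppose d = 2. Then for every orthonormal basis {a'_1, a'_2} of H, the error-disturbance trade-off ε(𝒜,𝒜') + η(𝒜',ℬ) ≥ η(𝒜,ℬ) holds, where η(𝒜,ℬ) = |⟨a_1, b_1⟩| · √(1 − |⟨a_1, b_1⟩|²). -/
open scoped ComplexInnerProductSpace

noncomputable section

variable {H : Type*} [NormedAddCommGroup H] [InnerProductSpace ℂ H] [FiniteDimensional ℂ H]
variable {ι ι' : Type*} [Fintype ι] [Fintype ι']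

/-- The rank-one projector `|v⟩⟨v|`. -/
def ketbra (v : H) : H →ₗ[ℂ] H where
  toFun x := ⟪v, x⟫ • v
  map_add' x y := by simp [inner_add_right, add_smul]
  map_smul' c x := by simp [inner_smul_right, mul_smul]

/-- A density operator: self-adjoint, positive semidefinite, trace one. -/
def IsDensity (ρ : H →ₗ[ℂ] H) : Prop :=
  LinearMap.IsSymmetric ρ ∧ (∀ x : H, 0 ≤ (⟪x, ρ x⟫).re) ∧
    LinearMap.trace ℂ H ρ = 1

/-- The state-dependent error `ε_ρ(𝒜,𝒜')`. -/
def sdError (a a' : ι → H) (ρ : H →ₗ[ℂ] H) : ℝ :=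
  ⨆ i : ι, ‖LinearMap.trace ℂ H (ρ ∘ₗ (ketbra (a i) - ketbra (a' i)))‖

/-- The state-independent error `ε(𝒜,𝒜')`. -/
def siError (a a' : ι → H) : ℝ :=
  ⨆ ρ : {ρ : H →ₗ[ℂ] H // IsDensity ρ}, sdError a a' ρ.1

/-- The operator `|b_i⟩⟨b_i| − Σ_j |⟨a'_j, b_i⟩|² |a'_j⟩⟨a'_j|`. -/
def distOp (a' : ι' → H) (b : ι → H) (i : ι) : H →ₗ[ℂ] H :=
  ketbra (b i) - ∑ j : ι', (‖⟪a' j, b i⟫‖ ^ 2 : ℂ) • ketbra (a' j)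

/-- The state-dependent disturbance `η_ρ(𝒜',ℬ)`. -/
def sdDist (a' : ι' → H) (b : ι → H) (ρ : H →ₗ[ℂ] H) : ℝ :=
  ⨆ i : ι, ‖LinearMap.trace ℂ H (ρ ∘ₗ distOp a' b i)‖

/-- The state-independent disturbance `η(𝒜',ℬ)`. -/
def siDist (a' : ι' → H) (b : ι → H) : ℝ :=
  ⨆ ρ : {ρ : H →ₗ[ℂ] H // IsDensity ρ}, sdDist a' b ρ.1

/-- The state-independent overall error `Δ(𝒜,𝒜',ℬ)`. -/
def siOverall (a a' b : ι → H) : ℝ :=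
  ⨆ ρ : {ρ : H →ₗ[ℂ] H // IsDensity ρ}, (sdError a a' ρ.1 + sdDist a' b ρ.1)
/-!
In the basis `a`, the disturbance operator of `b i` is the off-diagonal part of `|b i⟩⟨b i|`, so
its expectation in a state `ρ` is `2 re (conj ⟪a 0, b i⟫ ⟪a 1, b i⟫ ρ₀₁)` with
`ρ₀₁ = ⟪a 0, ρ (a 1)⟫`. Positivity of `ρ` on `a 0 ± c • a 1` gives `|re (c ρ₀₁)| ≤ 1/2` for every
unit `c`, whence `η(𝒜,ℬ) ≤ |⟪a 0, b 0⟫| |⟪a 1, b 0⟫|`; the bound is attained by the pure state of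
`(a 0 + c • a 1) / √2` for the phase `c` of `conj ⟪a 0, b 0⟫ ⟪a 1, b 0⟫`.

That state has diagonal `(1/2, 1/2)` in the basis `a`. For such a state, replacing `a` by `a'`
changes the disturbance by `(1 - 2 |⟪a' 0, b 0⟫|²)` times the error
`tr ρ (|a 0⟩⟨a 0| - |a' 0⟩⟨a' 0|)`, a factor in `[-1, 1]`; the triangle inequality then gives the
trade-off.
-/

section

variable {E : Type*} [NormedAddCommGroup E] [InnerProductSpace ℂ E] {κ κ' : Type*}

lemma ketbra_apply (v x : E) : ketbra v x = ⟪v, x⟫ • v := rfl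

lemma trace_comp_ketbra [FiniteDimensional ℂ E] (ρ : E →ₗ[ℂ] E) (v : E) :
    LinearMap.trace ℂ E (ρ ∘ₗ ketbra v) = ⟪v, ρ v⟫ := by
  rw [LinearMap.trace_eq_sum_inner _ (stdOrthonormalBasis ℂ E)]
  simp only [LinearMap.comp_apply, ketbra_apply, map_smul, inner_smul_right]
  exact (stdOrthonormalBasis ℂ E).sum_inner_mul_inner v (ρ v)

lemma trace_comp_distOp [FiniteDimensional ℂ E] [Fintype κ'] (ρ : E →ₗ[ℂ] E) (a' : κ' → E)
    (b : κ → E) (i : κ) :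
    LinearMap.trace ℂ E (ρ ∘ₗ distOp a' b i)
      = ⟪b i, ρ (b i)⟫ - ∑ j, (‖⟪a' j, b i⟫‖ ^ 2 : ℂ) * ⟪a' j, ρ (a' j)⟫ := by
  rw [distOp, ← Module.End.mul_eq_comp, mul_sub, Finset.mul_sum, map_sub, map_sum,
    Module.End.mul_eq_comp, trace_comp_ketbra]
  simp only [mul_smul_comm, map_smul, Module.End.mul_eq_comp, trace_comp_ketbra, smul_eq_mul]

lemma isDensity_ketbra [FiniteDimensional ℂ E] {u : E} (hu : ‖u‖ = 1) : IsDensity (ketbra u) := by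
  refine ⟨fun x y => ?_, fun x => ?_, ?_⟩
  · simp only [ketbra_apply, inner_smul_left, inner_smul_right, inner_conj_symm, mul_comm]
  · rw [ketbra_apply, inner_smul_right, ← inner_conj_symm x u, Complex.mul_conj']
    norm_cast
    positivity
  · simpa [inner_self_eq_norm_sq_to_K, hu] using trace_comp_ketbra LinearMap.id u

lemma LinearMap.IsSymmetric.inner_apply_swap {ρ : E →ₗ[ℂ] E} (hρ : ρ.IsSymmetric) (x y : E) :
    ⟪y, ρ x⟫ = starRingEnd ℂ ⟪x, ρ y⟫ := by
  rw [← hρ, inner_conj_symm]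

lemma IsDensity.inner_apply_self_eq_re {ρ : E →ₗ[ℂ] E} (hρ : IsDensity ρ) (v : E) :
    ⟪v, ρ v⟫ = ((⟪v, ρ v⟫).re : ℂ) := by
  rw [← hρ.1]
  exact (hρ.1.coe_re_inner_apply_self v).symm

lemma IsDensity.re_inner_le_one [Fintype κ] {ρ : E →ₗ[ℂ] E} (hρ : IsDensity ρ)
    (e : OrthonormalBasis κ ℂ E) (i : κ) : (⟪e i, ρ (e i)⟫).re ≤ 1 := by
  have htr := congrArg Complex.re ((LinearMap.trace_eq_sum_inner ρ e).symm.trans hρ.2.2)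
  rw [Complex.re_sum, Complex.one_re] at htr
  exact htr ▸ Finset.single_le_sum (fun j _ => hρ.2.1 (e j)) (Finset.mem_univ i)

lemma le_sdError [Finite κ] {a a' : κ → E} {ρ : E →ₗ[ℂ] E} (i : κ) :
    ‖LinearMap.trace ℂ E (ρ ∘ₗ (ketbra (a i) - ketbra (a' i)))‖ ≤ sdError a a' ρ :=
  le_ciSup (f := fun j => ‖LinearMap.trace ℂ E (ρ ∘ₗ (ketbra (a j) - ketbra (a' j)))‖)
    (Finite.bddAbove_range _) i

lemma le_sdDist [Finite κ] [Fintype κ'] {a' : κ' → E} {b : κ → E} {ρ : E →ₗ[ℂ] E} (i : κ) :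
    ‖LinearMap.trace ℂ E (ρ ∘ₗ distOp a' b i)‖ ≤ sdDist a' b ρ :=
  le_ciSup (f := fun j => ‖LinearMap.trace ℂ E (ρ ∘ₗ distOp a' b j)‖)
    (Finite.bddAbove_range _) i

lemma sdError_le_one [FiniteDimensional ℂ E] [Fintype κ] {ρ : E →ₗ[ℂ] E} (hρ : IsDensity ρ)
    (a a' : OrthonormalBasis κ ℂ E) : sdError a a' ρ ≤ 1 := by
  refine Real.iSup_le (fun i => ?_) zero_le_one
  rw [LinearMap.comp_sub, map_sub, trace_comp_ketbra, trace_comp_ketbra,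
    hρ.inner_apply_self_eq_re, hρ.inner_apply_self_eq_re (a' i), ← Complex.ofReal_sub,
    Complex.norm_real, Real.norm_eq_abs, abs_le]
  constructor <;> linarith [hρ.re_inner_le_one a i, hρ.re_inner_le_one a' i, hρ.2.1 (a i),
    hρ.2.1 (a' i)]

lemma sdError_le_siError [FiniteDimensional ℂ E] [Fintype κ] {ρ : E →ₗ[ℂ] E}
    (hρ : IsDensity ρ) (a a' : OrthonormalBasis κ ℂ E) : sdError a a' ρ ≤ siError a a' :=
  le_ciSup (f := fun σ : {σ // IsDensity σ} => sdError a a' σ.1)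
    ⟨1, Set.forall_mem_range.2 fun σ => sdError_le_one σ.2 a a'⟩ ⟨ρ, hρ⟩

lemma trace_eq_inner_add_inner (ρ : E →ₗ[ℂ] E) (e : OrthonormalBasis (Fin 2) ℂ E) :
    LinearMap.trace ℂ E ρ = ⟪e 0, ρ (e 0)⟫ + ⟪e 1, ρ (e 1)⟫ := by
  rw [LinearMap.trace_eq_sum_inner _ e, Fin.sum_univ_two]

lemma norm_sq_inner_add_norm_sq_inner {v : E} (hv : ‖v‖ = 1) (e : OrthonormalBasis (Fin 2) ℂ E) :
    ‖⟪e 0, v⟫‖ ^ 2 + ‖⟪e 1, v⟫‖ ^ 2 = 1 := by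
  rw [← Fin.sum_univ_two (f := fun j => ‖⟪e j, v⟫‖ ^ 2), e.sum_sq_norm_inner_right, hv, one_pow]

lemma norm_inner_mul_norm_inner_one_eq (a b : OrthonormalBasis (Fin 2) ℂ E) :
    ‖⟪a 0, b 1⟫‖ * ‖⟪a 1, b 1⟫‖ = ‖⟪a 0, b 0⟫‖ * ‖⟪a 1, b 0⟫‖ := by
  have hrow : ∀ j, ‖⟪a j, b 0⟫‖ ^ 2 + ‖⟪a j, b 1⟫‖ ^ 2 = 1 := fun j => by
    simp only [← inner_conj_symm (a j), RCLike.norm_conj]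
    exact norm_sq_inner_add_norm_sq_inner (a.orthonormal.1 j) b
  have hcol := norm_sq_inner_add_norm_sq_inner (b.orthonormal.1 0) a
  have h₁ := hrow 0
  have h₂ := hrow 1
  have h₀₁ : ‖⟪a 0, b 1⟫‖ = ‖⟪a 1, b 0⟫‖ := by
    rw [← sq_eq_sq₀ (norm_nonneg _) (norm_nonneg _)]; linarith
  have h₁₁ : ‖⟪a 1, b 1⟫‖ = ‖⟪a 0, b 0⟫‖ := by
    rw [← sq_eq_sq₀ (norm_nonneg _) (norm_nonneg _)]; linarith
  rw [h₀₁, h₁₁, mul_comm]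

lemma IsDensity.abs_re_mul_inner_le_half {ρ : E →ₗ[ℂ] E} (hρ : IsDensity ρ)
    (e : OrthonormalBasis (Fin 2) ℂ E) {c : ℂ} (hc : ‖c‖ = 1) :
    |(c * ⟪e 0, ρ (e 1)⟫).re| ≤ 1 / 2 := by
  have hpos : ∀ d : ℂ, ‖d‖ = 1 → 0 ≤ 1 + 2 * (d * ⟪e 0, ρ (e 1)⟫).re := by
    intro d hd
    have hdd : starRingEnd ℂ d * d = 1 := by rw [Complex.conj_mul', hd]; norm_num
    have hx : ⟪e 0 + d • e 1, ρ (e 0 + d • e 1)⟫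
        = 1 + (d * ⟪e 0, ρ (e 1)⟫ + starRingEnd ℂ (d * ⟪e 0, ρ (e 1)⟫)) := by
      simp only [map_add, map_smul, inner_add_left, inner_add_right, inner_smul_left,
        inner_smul_right, hρ.1.inner_apply_swap (e 0) (e 1), map_mul]
      linear_combination (trace_eq_inner_add_inner ρ e).symm.trans hρ.2.2
        + ⟪e 1, ρ (e 1)⟫ * hdd
    have := hρ.2.1 (e 0 + d • e 1)
    rwa [hx, Complex.add_conj, Complex.add_re, Complex.one_re, Complex.ofReal_re] at this
  have h₁ := hpos c hc
  have h₂ := hpos (-c) (by rwa [norm_neg])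
  rw [neg_mul, Complex.neg_re] at h₂
  rw [abs_le]
  constructor <;> linarith

lemma trace_comp_distOp_fin_two [FiniteDimensional ℂ E] {ρ : E →ₗ[ℂ] E} (hρ : ρ.IsSymmetric)
    (e : OrthonormalBasis (Fin 2) ℂ E) (b : κ → E) (i : κ) :
    LinearMap.trace ℂ E (ρ ∘ₗ distOp e b i)
      = ((2 * (starRingEnd ℂ ⟪e 0, b i⟫ * ⟪e 1, b i⟫ * ⟪e 0, ρ (e 1)⟫).re : ℝ) : ℂ) := by
  have hb : b i = ⟪e 0, b i⟫ • e 0 + ⟪e 1, b i⟫ • e 1 := by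
    simpa only [Fin.sum_univ_two] using (e.sum_repr' (b i)).symm
  rw [trace_comp_distOp, Fin.sum_univ_two, ← Complex.add_conj]
  set α := ⟪e 0, b i⟫
  set β := ⟪e 1, b i⟫
  rw [hb]
  simp only [map_add, map_smul, inner_add_left, inner_add_right, inner_smul_left,
    inner_smul_right, hρ.inner_apply_swap (e 0) (e 1), map_mul, Complex.conj_conj,
    ← Complex.conj_mul']
  ring

lemma IsDensity.norm_trace_comp_distOp_le [FiniteDimensional ℂ E] {ρ : E →ₗ[ℂ] E}
    (hρ : IsDensity ρ) (e : OrthonormalBasis (Fin 2) ℂ E) (b : κ → E) (i : κ) :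
    ‖LinearMap.trace ℂ E (ρ ∘ₗ distOp e b i)‖ ≤ ‖⟪e 0, b i⟫‖ * ‖⟪e 1, b i⟫‖ := by
  set z := starRingEnd ℂ ⟪e 0, b i⟫ * ⟪e 1, b i⟫
  have hz : ‖z‖ = ‖⟪e 0, b i⟫‖ * ‖⟪e 1, b i⟫‖ := by rw [norm_mul, RCLike.norm_conj]
  set c := Complex.exp (z.arg * Complex.I)
  have hre : (z * ⟪e 0, ρ (e 1)⟫).re = ‖z‖ * (c * ⟪e 0, ρ (e 1)⟫).re := by
    conv_lhs => rw [← Complex.norm_mul_exp_arg_mul_I z, mul_assoc, Complex.re_ofReal_mul]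
  have hc := hρ.abs_re_mul_inner_le_half e (Complex.norm_exp_ofReal_mul_I z.arg)
  rw [trace_comp_distOp_fin_two hρ.1, Complex.norm_real, Real.norm_eq_abs, hre, ← hz, abs_mul,
    abs_mul, abs_two, abs_norm]
  nlinarith [norm_nonneg z]

lemma sdDist_le [FiniteDimensional ℂ E] {ρ : E →ₗ[ℂ] E} (hρ : IsDensity ρ)
    (a b : OrthonormalBasis (Fin 2) ℂ E) : sdDist a b ρ ≤ ‖⟪a 0, b 0⟫‖ * ‖⟪a 1, b 0⟫‖ := by
  refine ciSup_le fun i => ?_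
  fin_cases i
  · exact hρ.norm_trace_comp_distOp_le a b 0
  · exact (hρ.norm_trace_comp_distOp_le a b 1).trans_eq (norm_inner_mul_norm_inner_one_eq a b)

lemma sdDist_le_siDist [FiniteDimensional ℂ E] {ρ : E →ₗ[ℂ] E} (hρ : IsDensity ρ)
    (a b : OrthonormalBasis (Fin 2) ℂ E) : sdDist a b ρ ≤ siDist a b :=
  le_ciSup (f := fun σ : {σ // IsDensity σ} => sdDist a b σ.1)
    ⟨_, Set.forall_mem_range.2 fun σ => sdDist_le σ.2 a b⟩ ⟨ρ, hρ⟩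

lemma exists_isDensity_trace_comp_distOp_eq [FiniteDimensional ℂ E]
    (e : OrthonormalBasis (Fin 2) ℂ E) (b : κ → E) (i : κ) :
    ∃ ρ : E →ₗ[ℂ] E, IsDensity ρ ∧ ⟪e 0, ρ (e 0)⟫ = 1 / 2 ∧ ⟪e 1, ρ (e 1)⟫ = 1 / 2 ∧
      LinearMap.trace ℂ E (ρ ∘ₗ distOp e b i) = ((‖⟪e 0, b i⟫‖ * ‖⟪e 1, b i⟫‖ : ℝ) : ℂ) := by
  set z := starRingEnd ℂ ⟪e 0, b i⟫ * ⟪e 1, b i⟫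
  set c := Complex.exp (z.arg * Complex.I)
  have hc : ‖c‖ = 1 := Complex.norm_exp_ofReal_mul_I z.arg
  have hcc : starRingEnd ℂ c * c = 1 := by rw [Complex.conj_mul', hc]; norm_num
  set s : ℝ := (Real.sqrt 2)⁻¹
  have hs : (s : ℂ) * s = 1 / 2 := by
    rw [← Complex.ofReal_mul, ← mul_inv, Real.mul_self_sqrt zero_le_two]; norm_num
  set u : E := (s : ℂ) • e 0 + ((s : ℂ) * c) • e 1
  have hu₀ : ⟪e 0, u⟫ = s := by simp [u, e.inner_eq_ite]
  have hu₁ : ⟪e 1, u⟫ = s * c := by simp [u, e.inner_eq_ite]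
  have hdiag : ∀ j, ⟪e j, ketbra u (e j)⟫ = starRingEnd ℂ ⟪e j, u⟫ * ⟪e j, u⟫ := fun j => by
    rw [ketbra_apply, inner_smul_right, inner_conj_symm, mul_comm]
  have hnorm : ‖u‖ = 1 := by
    have := e.sum_sq_norm_inner_right u
    rw [Fin.sum_univ_two, hu₀, hu₁, norm_mul, hc, mul_one, ← two_mul, Complex.norm_real,
      Real.norm_eq_abs, sq_abs, inv_pow, Real.sq_sqrt zero_le_two] at this
    nlinarith [norm_nonneg u]
  have hρ := isDensity_ketbra hnorm
  refine ⟨ketbra u, hρ, ?_, ?_, ?_⟩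
  · rw [hdiag, hu₀, Complex.conj_ofReal, hs]
  · rw [hdiag, hu₁, map_mul, Complex.conj_ofReal]
    linear_combination (s : ℂ) * s * hcc + hs
  · have hz : z * ⟪e 0, ketbra u (e 1)⟫ = ((‖z‖ / 2 : ℝ) : ℂ) := by
      have hzc : z = ‖z‖ * c := (Complex.norm_mul_exp_arg_mul_I z).symm
      rw [ketbra_apply, inner_smul_right, ← inner_conj_symm, hu₀, hu₁, map_mul,
        Complex.conj_ofReal]
      push_cast
      linear_combination (s * s * starRingEnd ℂ c) * hzc + (‖z‖ : ℂ) * (s * s * hcc + hs)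
    rw [trace_comp_distOp_fin_two hρ.1, hz, Complex.ofReal_re, norm_mul, RCLike.norm_conj]
    push_cast
    ring

lemma norm_trace_comp_distOp_sub_le [FiniteDimensional ℂ E] {ρ : E →ₗ[ℂ] E}
    (htr : LinearMap.trace ℂ E ρ = 1) (a a' : OrthonormalBasis (Fin 2) ℂ E)
    (h₀ : ⟪a 0, ρ (a 0)⟫ = 1 / 2) (h₁ : ⟪a 1, ρ (a 1)⟫ = 1 / 2) {b : κ → E} {i : κ}
    (hb : ‖b i‖ = 1) :
    ‖LinearMap.trace ℂ E (ρ ∘ₗ distOp a b i) - LinearMap.trace ℂ E (ρ ∘ₗ distOp a' b i)‖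
      ≤ ‖LinearMap.trace ℂ E (ρ ∘ₗ (ketbra (a 0) - ketbra (a' 0)))‖ := by
  have hpar : ∀ e : OrthonormalBasis (Fin 2) ℂ E,
      (‖⟪e 0, b i⟫‖ ^ 2 : ℂ) + ‖⟪e 1, b i⟫‖ ^ 2 = 1 := fun e => by
    exact_mod_cast norm_sq_inner_add_norm_sq_inner hb e
  have hx := norm_sq_inner_add_norm_sq_inner hb a'
  set x := ‖⟪a' 0, b i⟫‖
  have hdiff :
      LinearMap.trace ℂ E (ρ ∘ₗ distOp a b i) - LinearMap.trace ℂ E (ρ ∘ₗ distOp a' b i)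
        = ((1 - 2 * x ^ 2 : ℝ) : ℂ)
          * LinearMap.trace ℂ E (ρ ∘ₗ (ketbra (a 0) - ketbra (a' 0))) := by
    rw [trace_comp_distOp, trace_comp_distOp, Fin.sum_univ_two, Fin.sum_univ_two,
      LinearMap.comp_sub, map_sub, trace_comp_ketbra, trace_comp_ketbra, h₀, h₁]
    push_cast
    linear_combination (-1 / 2 : ℂ) * hpar a + ⟪a' 1, ρ (a' 1)⟫ * hpar a'
      + (1 - (x : ℂ) ^ 2) * ((trace_eq_inner_add_inner ρ a').symm.trans htr)
  rw [hdiff, norm_mul, Complex.norm_real, Real.norm_eq_abs]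
  refine mul_le_of_le_one_left (norm_nonneg _) (abs_le.mpr ⟨?_, ?_⟩) <;>
    nlinarith [sq_nonneg x, sq_nonneg ‖⟪a' 1, b i⟫‖]

end

/-- qubit error-disturbance trade-off `ε(𝒜,𝒜') + η(𝒜',ℬ) ≥ η(𝒜,ℬ)`,
where `η(𝒜,ℬ) = |⟨a₁,b₁⟩|·√(1-|⟨a₁,b₁⟩|²)`. -/
theorem qubit_error_disturbance_tradeoff (a b : OrthonormalBasis (Fin 2) ℂ H)
    (a' : OrthonormalBasis (Fin 2) ℂ H) :
    siDist (⇑a) (⇑b) ≤ siError (⇑a) (⇑a') + siDist (⇑a') (⇑b) ∧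
    siDist (⇑a) (⇑b) = ‖⟪a 0, b 0⟫‖ * Real.sqrt (1 - ‖⟪a 0, b 0⟫‖ ^ 2) := by
  obtain ⟨ρ, hρ, h₀, h₁, hval⟩ := exists_isDensity_trace_comp_distOp_eq a b 0
  have hval' : ‖LinearMap.trace ℂ H (ρ ∘ₗ distOp a b 0)‖ = ‖⟪a 0, b 0⟫‖ * ‖⟪a 1, b 0⟫‖ := by
    rw [hval, Complex.norm_real, Real.norm_of_nonneg (by positivity)]
  have hsi : siDist a b = ‖⟪a 0, b 0⟫‖ * ‖⟪a 1, b 0⟫‖ :=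
    le_antisymm (Real.iSup_le (fun σ => sdDist_le σ.2 a b) (by positivity))
      (hval' ▸ (le_sdDist 0).trans (sdDist_le_siDist hρ a b))
  have hsqrt : Real.sqrt (1 - ‖⟪a 0, b 0⟫‖ ^ 2) = ‖⟪a 1, b 0⟫‖ := by
    rw [← norm_sq_inner_add_norm_sq_inner (b.orthonormal.1 0) a, add_sub_cancel_left,
      Real.sqrt_sq (norm_nonneg _)]
  refine ⟨?_, by rw [hsi, hsqrt]⟩
  calc siDist a b = ‖LinearMap.trace ℂ H (ρ ∘ₗ distOp a b 0)‖ := by rw [hsi, hval']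
    _ ≤ ‖LinearMap.trace ℂ H (ρ ∘ₗ distOp a' b 0)‖
        + ‖LinearMap.trace ℂ H (ρ ∘ₗ distOp a b 0)
          - LinearMap.trace ℂ H (ρ ∘ₗ distOp a' b 0)‖ := norm_le_norm_add_norm_sub' _ _
    _ ≤ sdDist a' b ρ + sdError a a' ρ :=
      add_le_add (le_sdDist 0) ((norm_trace_comp_distOp_sub_le hρ.2.2 a a' h₀ h₁
        (b.orthonormal.1 0)).trans (le_sdError 0))
    _ ≤ siDist a' b + siError a a' :=
      add_le_add (sdDist_le_siDist hρ a' b) (sdError_le_siError hρ a a')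
    _ = siError a a' + siDist a' b := add_comm _ _
end
end

section
/- Let {a_k}_{k=1}^d be an orthonormal basis of a d-dimensional complex Hilbert space (d ≥ 2), let v be a unit vector, and let j be any index. Then (1/d) · Σ_{k≠l} |⟨a_k, v⟩| · |⟨a_l, v⟩| ≤ √(1 − |⟨a_j, v⟩|²), where the sum runs over all ordered pairs (k,l) with k ≠ l. -/
set_option maxHeartbeats 1000000


open scoped ComplexInnerProductSpace

noncomputable section

variable {H : Type*} [NormedAddCommGroup H] [InnerProductSpace ℂ H] [FiniteDimensional ℂ H]
variable {ι ι' : Type*} [Fintype ι] [Fintype ι']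

/-- for an orthonormal basis `a`, a unit vector `v` and any index `j`,
`(1/d)·Σ_{k≠l} |⟨a_k,v⟩||⟨a_l,v⟩| ≤ √(1-|⟨a_j,v⟩|²)`. -/
theorem offdiag_sum_le_sqrt {d : ℕ} (hd : 2 ≤ d) (a : OrthonormalBasis (Fin d) ℂ H)
    (v : H) (hv : ‖v‖ = 1) (j : Fin d) :
    (1 / (d : ℝ)) * ∑ p ∈ Finset.univ.filter (fun p : Fin d × Fin d => p.1 ≠ p.2),
        ‖⟪a p.1, v⟫‖ * ‖⟪a p.2, v⟫‖
      ≤ Real.sqrt (1 - ‖⟪a j, v⟫‖ ^ 2) := by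
  set c : Fin d → ℝ := fun k => ‖⟪a k, v⟫‖ with hc
  have hc0 : ∀ k, 0 ≤ c k := fun k => norm_nonneg _
  -- Parseval
  have hsum2 : ∑ k, c k ^ 2 = 1 := by
    have h1 : ‖a.repr v‖ = 1 := by rw [a.repr.norm_map, hv]
    have h2 := EuclideanSpace.norm_eq (a.repr v)
    rw [h1] at h2
    have h3 : ∑ k, ‖a.repr v k‖ ^ 2 = 1 := by
      rw [← Real.sq_sqrt (Finset.sum_nonneg fun (i : Fin d) _ => sq_nonneg ‖a.repr v i‖), ← h2]
      norm_num
    simpa [hc, a.repr_apply_apply] using h3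
  -- off-diagonal sum
  have hoff : ∑ p ∈ Finset.univ.filter (fun p : Fin d × Fin d => p.1 ≠ p.2),
      c p.1 * c p.2 = (∑ k, c k) ^ 2 - 1 := by
    have htot : ∑ p : Fin d × Fin d, c p.1 * c p.2 = (∑ k, c k) ^ 2 := by
      rw [sq, Finset.sum_mul_sum, ← Finset.sum_product']
      rfl
    have hsplit := Finset.sum_filter_add_sum_filter_not Finset.univ
      (fun p : Fin d × Fin d => p.1 = p.2) (fun p => c p.1 * c p.2)
    have hdiag : ∑ p ∈ Finset.univ.filter (fun p : Fin d × Fin d => p.1 = p.2),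
        c p.1 * c p.2 = 1 := by
      rw [← hsum2]
      apply Finset.sum_nbij' (fun p => p.1) (fun k => (k, k)) <;> simp +contextual [sq, eq_comm]
    simp only [ne_eq]
    linarith [htot, hdiag, hsplit]
  have hdR : (2:ℝ) ≤ (d:ℝ) := by exact_mod_cast hd
  have hd0 : (0:ℝ) < d := by linarith
  show (1 / (d : ℝ)) * ∑ p ∈ Finset.univ.filter (fun p : Fin d × Fin d => p.1 ≠ p.2),
      c p.1 * c p.2 ≤ Real.sqrt (1 - c j ^ 2)
  rw [hoff]
  set t := c j with htdef
  have ht0 : 0 ≤ t := hc0 j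
  have ht1 : t ^ 2 ≤ 1 := by
    rw [← hsum2]
    exact Finset.single_le_sum (fun k _ => sq_nonneg (c k)) (Finset.mem_univ j)
  set u := Real.sqrt (1 - t ^ 2) with hu
  have hu0 : 0 ≤ u := Real.sqrt_nonneg _
  have hu2 : u ^ 2 = 1 - t ^ 2 := Real.sq_sqrt (by linarith)
  set w := Real.sqrt ((d:ℝ) - 1) with hw
  have hw0 : 0 ≤ w := Real.sqrt_nonneg _
  have hw2 : w ^ 2 = (d:ℝ) - 1 := Real.sq_sqrt (by linarith)
  set E := ∑ k ∈ Finset.univ.erase j, c k with hE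
  have hE0 : 0 ≤ E := Finset.sum_nonneg fun k _ => hc0 k
  have herase2 : ∑ k ∈ Finset.univ.erase j, c k ^ 2 = 1 - t ^ 2 := by
    have h : c j ^ 2 + ∑ k ∈ Finset.univ.erase j, c k ^ 2 = ∑ k, c k ^ 2 :=
      Finset.add_sum_erase Finset.univ (fun k => c k ^ 2) (Finset.mem_univ j)
    linarith [hsum2, h]
  have hCS : E ^ 2 ≤ ((d:ℝ) - 1) * (1 - t ^ 2) := by
    have h := sq_sum_le_card_mul_sum_sq (s := Finset.univ.erase j) (f := c)
    have hcard : (((Finset.univ : Finset (Fin d)).erase j).card : ℝ) = (d:ℝ) - 1 := by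
      rw [Finset.card_erase_of_mem (Finset.mem_univ j), Finset.card_univ, Fintype.card_fin,
        Nat.cast_sub (by omega), Nat.cast_one]
    rw [herase2] at h
    calc E ^ 2 ≤ ((((Finset.univ : Finset (Fin d)).erase j).card : ℝ)) * (1 - t ^ 2) := h
      _ = ((d:ℝ) - 1) * (1 - t ^ 2) := by rw [hcard]
  have hE_le : E ≤ w * u := by
    nlinarith [hCS, hu2, hw2, hE0, mul_nonneg hw0 hu0, sq_nonneg (E - w*u), sq_nonneg (E + w*u)]
  have hS : ∑ k, c k = t + E :=
    (Finset.add_sum_erase Finset.univ c (Finset.mem_univ j)).symm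
  rw [hS]
  have hkey : ((d:ℝ) - 2) * u + 2 * t * w ≤ d := by
    have hXnn : 0 ≤ ((d:ℝ) - 2) * u + 2 * t * w := by
      have := mul_nonneg (by linarith : (0:ℝ) ≤ (d:ℝ) - 2) hu0
      have := mul_nonneg (mul_nonneg (by norm_num : (0:ℝ) ≤ 2) ht0) hw0
      linarith
    have hX2 : (((d:ℝ) - 2) * u + 2 * t * w) ^ 2 ≤ (d:ℝ) ^ 2 := by
      nlinarith [sq_nonneg (((d:ℝ)-2)*t - 2*w*u), hu2, hw2]
    calc ((d:ℝ) - 2) * u + 2 * t * w = Real.sqrt ((((d:ℝ) - 2) * u + 2 * t * w) ^ 2) :=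
          (Real.sqrt_sq hXnn).symm
      _ ≤ Real.sqrt ((d:ℝ) ^ 2) := Real.sqrt_le_sqrt hX2
      _ = (d:ℝ) := Real.sqrt_sq (by linarith)
  have hS2 : (t + E) ^ 2 ≤ (t + w * u) ^ 2 := by nlinarith [hE_le, hE0, ht0, mul_nonneg hw0 hu0]
  rw [one_div, inv_mul_le_iff₀ hd0]
  nlinarith [hS2, hkey, hu0, hu2, hw2, mul_le_mul_of_nonneg_left hkey hu0]
end
end

section
/- Let {a_k}_{k=1}^d be an orthonormal basis of a d-dimensional complex Hilbert space (d ≥ 2), let b be a unit vector that is unbiased with respect to this basis (|⟨a_k, b⟩|² = 1/d for all k), and let v be any unit vector. Then | |⟨b, v⟩|² − 1/d | ≤ (1/d) · Σ_{k≠l} |⟨a_k, v⟩| · |⟨a_l, v⟩|, where the sum runs over all ordered pairs (k,l) with k ≠ l. -/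
open scoped ComplexInnerProductSpace

noncomputable section

variable {H : Type*} [NormedAddCommGroup H] [InnerProductSpace ℂ H] [FiniteDimensional ℂ H]
variable {ι ι' : Type*} [Fintype ι] [Fintype ι']

/-- for a unit vector `b` unbiased in an orthonormal basis `a` and any unit
vector `v`, `||⟨b,v⟩|² - 1/d| ≤ (1/d)·Σ_{k≠l} |⟨a_k,v⟩||⟨a_l,v⟩|`. -/
theorem unbiased_overlap_bound {d : ℕ} (hd : 2 ≤ d) (a : OrthonormalBasis (Fin d) ℂ H)
    (b v : H) (hb : ‖b‖ = 1) (hv : ‖v‖ = 1)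
    (hub : ∀ k : Fin d, ‖⟪a k, b⟫‖ ^ 2 = 1 / (d : ℝ)) :
    |‖⟪b, v⟫‖ ^ 2 - 1 / (d : ℝ)| ≤
      (1 / (d : ℝ)) * ∑ p ∈ Finset.univ.filter (fun p : Fin d × Fin d => p.1 ≠ p.2),
        ‖⟪a p.1, v⟫‖ * ‖⟪a p.2, v⟫‖ := by
  have hd0 : (0:ℝ) < d := by positivity
  set f : Fin d → ℂ := fun k => ⟪a k, v⟫ with hf
  set g : Fin d → ℂ := fun k => ⟪b, a k⟫ with hg
  have hgnorm : ∀ k, ‖g k‖ ^ 2 = 1 / d := by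
    intro k
    rw [hg]
    simp only
    rw [norm_inner_symm]
    exact hub k
  have hS : ⟪b, v⟫ = ∑ k, g k * f k := (a.sum_inner_mul_inner b v).symm
  -- Parseval
  have hPar : ∑ k, ‖f k‖ ^ 2 = 1 := by
    have h1 : ∑ k, ⟪v, a k⟫ * ⟪a k, v⟫ = ⟪v, v⟫ := a.sum_inner_mul_inner v v
    have h2 : ∀ k : Fin d, ⟪v, a k⟫ * ⟪a k, v⟫ = ((‖f k‖ : ℂ)) ^ 2 := by
      intro k
      rw [← inner_conj_symm (𝕜 := ℂ) (a k) v, Complex.mul_conj', norm_inner_symm]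
    have h3 : ((∑ k, ‖f k‖ ^ 2 : ℝ) : ℂ) = ⟪v, v⟫ := by
      rw [← h1]
      push_cast
      exact (Finset.sum_congr rfl fun k _ => (h2 k).symm)
    have h4 : ⟪v, v⟫ = (1 : ℂ) := by
      rw [inner_self_eq_norm_sq_to_K, hv]; norm_num
    rw [h4] at h3
    exact_mod_cast h3
  -- double sum expansion
  have hsq : ‖⟪b, v⟫‖ ^ 2 =
      (∑ p : Fin d × Fin d, (g p.1 * f p.1) * (starRingEnd ℂ) (g p.2 * f p.2)).re := by
    have h5 : ⟪b, v⟫ * (starRingEnd ℂ) ⟪b, v⟫ =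
        ∑ p : Fin d × Fin d, (g p.1 * f p.1) * (starRingEnd ℂ) (g p.2 * f p.2) := by
      rw [hS, map_sum, Finset.sum_mul_sum, ← Finset.sum_product']
      rfl
    rw [← h5, Complex.mul_conj', ← Complex.ofReal_pow, Complex.ofReal_re]
  -- diagonal part
  have hdiag : (∑ p ∈ Finset.univ.filter (fun p : Fin d × Fin d => p.1 = p.2),
      (g p.1 * f p.1) * (starRingEnd ℂ) (g p.2 * f p.2)).re = 1 / d := by
    have heq : ∑ p ∈ Finset.univ.filter (fun p : Fin d × Fin d => p.1 = p.2),
        (g p.1 * f p.1) * (starRingEnd ℂ) (g p.2 * f p.2)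
        = ∑ k : Fin d, ((‖g k * f k‖ ^ 2 : ℝ) : ℂ) := by
      rw [Finset.sum_filter, Fintype.sum_prod_type]
      apply Finset.sum_congr rfl
      intro k _
      simp only [Finset.sum_ite_eq, Finset.mem_univ, if_true]
      rw [Complex.mul_conj', ← Complex.ofReal_pow]
    rw [heq, Complex.re_sum]
    simp only [Complex.ofReal_re]
    have h6 : ∀ k, (‖g k * f k‖:ℝ) ^ 2 = (1/(d:ℝ)) * ‖f k‖ ^ 2 := by
      intro k
      rw [norm_mul, mul_pow, hgnorm k]
    rw [Finset.sum_congr rfl fun k _ => h6 k, ← Finset.mul_sum, hPar, mul_one]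
  have hsum := Finset.sum_filter_add_sum_filter_not (Finset.univ : Finset (Fin d × Fin d))
      (fun p => p.1 = p.2) (fun p => (g p.1 * f p.1) * (starRingEnd ℂ) (g p.2 * f p.2))
  have hkey : ‖⟪b, v⟫‖ ^ 2 - 1 / (d:ℝ) =
      (∑ p ∈ Finset.univ.filter (fun p : Fin d × Fin d => p.1 ≠ p.2),
        (g p.1 * f p.1) * (starRingEnd ℂ) (g p.2 * f p.2)).re := by
    rw [hsq, ← hsum, Complex.add_re, hdiag]
    simp only [ne_eq]
    ring
  rw [hkey]
  calc |(∑ p ∈ Finset.univ.filter (fun p : Fin d × Fin d => p.1 ≠ p.2),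
        (g p.1 * f p.1) * (starRingEnd ℂ) (g p.2 * f p.2)).re|
      ≤ ‖∑ p ∈ Finset.univ.filter (fun p : Fin d × Fin d => p.1 ≠ p.2),
        (g p.1 * f p.1) * (starRingEnd ℂ) (g p.2 * f p.2)‖ := Complex.abs_re_le_norm _
    _ ≤ ∑ p ∈ Finset.univ.filter (fun p : Fin d × Fin d => p.1 ≠ p.2),
        ‖(g p.1 * f p.1) * (starRingEnd ℂ) (g p.2 * f p.2)‖ := norm_sum_le _ _
    _ = ∑ p ∈ Finset.univ.filter (fun p : Fin d × Fin d => p.1 ≠ p.2),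
        (1/(d:ℝ)) * (‖f p.1‖ * ‖f p.2‖) := by
        apply Finset.sum_congr rfl
        intro p _
        rw [norm_mul, norm_mul, RCLike.norm_conj, norm_mul]
        have hgk : ∀ k, ‖g k‖ = Real.sqrt (1/(d:ℝ)) := by
          intro k
          rw [← Real.sqrt_sq (norm_nonneg (g k)), hgnorm k]
        have h7 : ‖g p.1‖ * ‖f p.1‖ * (‖g p.2‖ * ‖f p.2‖)
            = (‖g p.1‖ * ‖g p.2‖) * (‖f p.1‖ * ‖f p.2‖) := by ring
        rw [h7, hgk p.1, hgk p.2, Real.mul_self_sqrt (by positivity)]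
    _ = (1 / (d : ℝ)) * ∑ p ∈ Finset.univ.filter (fun p : Fin d × Fin d => p.1 ≠ p.2),
        ‖⟪a p.1, v⟫‖ * ‖⟪a p.2, v⟫‖ := by rw [← Finset.mul_sum]
end
end
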